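/- Let (X, m_s) be a complete M_s-metric space and T : X → X a self mapping such that m_s(Tx, Tx, Ty) ≤ λ[m_s(x,x,Tx) + m_s(y,y,Ty)] for all x, y ∈ X, where λ ∈ [0,1/2). Then T has a unique fixed point u ∈ X, and m_s(u,u,u) = 0. -/

import Mathlib

/-!
Along an orbit `xₙ = Tⁿ x₀`, the Kannan condition applied to `(xₙ, xₙ₊₁)` gives
`dₙ₊₁ ≤ λ/(1-λ) · dₙ` for `dₙ = m(xₙ, xₙ, xₙ₊₁)`, a geometric decay since `λ < 1/2`; as
`m(xᵢ₊₁, xᵢ₊₁, xⱼ₊₁) ≤ λ (dᵢ + dⱼ)`, every quantity in the `Mₛ`-Cauchy condition tends to `0`.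
The limit `u` satisfies `m(u, u, u) = 0`, and the `Mₛ`-triangle inequality through `xₙ₊₁`
together with the Kannan condition gives `(1 - λ) m(u, u, Tu) ≤ 0`. Axiom (1) then forces `Tu = u`.
-/

open Filter Topology

/-- `msmin m x y z = min {m(x,x,x), m(y,y,y), m(z,z,z)}`. -/
def msmin {X : Type*} (m : X → X → X → ℝ) (x y z : X) : ℝ :=
  min (m x x x) (min (m y y y) (m z z z))

/-- `msmax m x y z = max {m(x,x,x), m(y,y,y), m(z,z,z)}`. -/
def msmax {X : Type*} (m : X → X → X → ℝ) (x y z : X) : ℝ :=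
  max (m x x x) (max (m y y y) (m z z z))

/-- `m` is an `Mₛ`-metric on `X`. -/
structure IsMsMetric {X : Type*} (m : X → X → X → ℝ) : Prop where
  nonneg : ∀ x y z, 0 ≤ m x y z
  eq_iff : ∀ x y, (m x x x = m y y y ∧ m y y y = m x x y) ↔ x = y
  min_le : ∀ x y z, msmin m x y z ≤ m x y z
  symm : ∀ x y, m x x y = m y y x
  ineq : ∀ x y z t, m x y z - msmin m x y z ≤
    (m x x t - msmin m x x t) + (m y y t - msmin m y y t) + (m z z t - msmin m z z t)

/-- A sequence `x` converges to `a` in the `Mₛ`-metric sense. -/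
def MsConvergesTo {X : Type*} (m : X → X → X → ℝ) (x : ℕ → X) (a : X) : Prop :=
  Tendsto (fun n => m (x n) (x n) a - msmin m (x n) (x n) a) atTop (nhds 0)

/-- A sequence `x` is `Mₛ`-Cauchy: the two double limits exist (and are finite). -/
def MsCauchy {X : Type*} (m : X → X → X → ℝ) (x : ℕ → X) : Prop :=
  (∃ L : ℝ, Tendsto
      (fun p : ℕ × ℕ => m (x p.1) (x p.1) (x p.2) - msmin m (x p.1) (x p.1) (x p.2))
      atTop (nhds L)) ∧
  (∃ L : ℝ, Tendsto
      (fun p : ℕ × ℕ => msmax m (x p.1) (x p.1) (x p.2) - msmin m (x p.1) (x p.1) (x p.2))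
      atTop (nhds L))

/-- The `Mₛ`-metric space `(X, m)` is complete. -/
def MsComplete {X : Type*} (m : X → X → X → ℝ) : Prop :=
  ∀ x : ℕ → X, MsCauchy m x → ∃ a : X,
    Tendsto (fun n => m (x n) (x n) a - msmin m (x n) (x n) a) atTop (nhds 0) ∧
    Tendsto (fun n => msmax m (x n) (x n) a - msmin m (x n) (x n) a) atTop (nhds 0)

open Function

theorem tendsto_add_fst_snd_atTop {a : ℕ → ℝ} (ha : Tendsto a atTop (𝓝 0)) :
    Tendsto (fun p : ℕ × ℕ => a p.1 + a p.2) atTop (𝓝 0) := by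
  simpa using (ha.comp (tendsto_fst.mono_left prod_atTop_atTop_eq.ge)).add
    (ha.comp (tendsto_snd.mono_left prod_atTop_atTop_eq.ge))

theorem msmin_le_msmax {X : Type*} (m : X → X → X → ℝ) (x y z : X) :
    msmin m x y z ≤ msmax m x y z :=
  (min_le_left _ _).trans (le_max_left _ _)

namespace IsMsMetric

variable {X : Type*} {m : X → X → X → ℝ}

theorem msmin_nonneg (hm : IsMsMetric m) (x y z : X) : 0 ≤ msmin m x y z :=
  le_min (hm.nonneg _ _ _) (le_min (hm.nonneg _ _ _) (hm.nonneg _ _ _))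

theorem msmax_le_add (hm : IsMsMetric m) (x y : X) : msmax m x x y ≤ m x x x + m y y y := by
  have hx := hm.nonneg x x x
  have hy := hm.nonneg y y y
  exact max_le (by linarith) (max_le (by linarith) (by linarith))

theorem eq_of_eq_zero (hm : IsMsMetric m) {x y : X} (hx : m x x x = 0) (hy : m y y y = 0)
    (hxy : m x x y = 0) : x = y :=
  (hm.eq_iff x y).mp ⟨hx.trans hy.symm, hy.trans hxy.symm⟩

theorem sub_msmin_le (hm : IsMsMetric m) (x y z : X) :
    m x x y - msmin m x x y ≤ 2 * m x x z + m y y z := by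
  have := hm.ineq x x y z
  have := hm.msmin_nonneg x x z
  have := hm.msmin_nonneg y y z
  linarith

theorem msCauchy_of_tendsto_zero (hm : IsMsMetric m) {x : ℕ → X}
    (h : Tendsto (fun p : ℕ × ℕ => m (x p.1) (x p.1) (x p.2)) atTop (𝓝 0)) : MsCauchy m x := by
  have hdiag : Tendsto (fun n => m (x n) (x n) (x n)) atTop (𝓝 0) :=
    h.comp tendsto_atTop_diagonal
  refine ⟨⟨0, squeeze_zero (fun p => sub_nonneg.2 (hm.min_le _ _ _))
      (fun p => sub_le_self _ (hm.msmin_nonneg _ _ _)) h⟩,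
    ⟨0, squeeze_zero (fun p => sub_nonneg.2 (msmin_le_msmax _ _ _ _)) (fun p => ?_)
      (tendsto_add_fst_snd_atTop hdiag)⟩⟩
  have := hm.msmax_le_add (x p.1) (x p.2)
  have := hm.msmin_nonneg (x p.1) (x p.1) (x p.2)
  linarith

theorem tendsto_msmin (hm : IsMsMetric m) {x : ℕ → X} (u : X)
    (hx : Tendsto (fun n => m (x n) (x n) (x n)) atTop (𝓝 0)) :
    Tendsto (fun n => msmin m (x n) (x n) u) atTop (𝓝 0) :=
  squeeze_zero (fun _ => hm.msmin_nonneg _ _ _) (fun _ => min_le_left _ _) hx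

theorem tendsto_of_msConvergesTo (hm : IsMsMetric m) {x : ℕ → X} {u : X}
    (hx : Tendsto (fun n => m (x n) (x n) (x n)) atTop (𝓝 0)) (hu : MsConvergesTo m x u) :
    Tendsto (fun n => m (x n) (x n) u) atTop (𝓝 0) := by
  simpa using hu.add (hm.tendsto_msmin u hx)

theorem self_eq_zero_of_tendsto_msmax_sub_msmin (hm : IsMsMetric m) {x : ℕ → X} {u : X}
    (hx : Tendsto (fun n => m (x n) (x n) (x n)) atTop (𝓝 0))
    (hu : Tendsto (fun n => msmax m (x n) (x n) u - msmin m (x n) (x n) u) atTop (𝓝 0)) :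
    m u u u = 0 := by
  have hmax : Tendsto (fun n => msmax m (x n) (x n) u) atTop (𝓝 0) := by
    simpa using hu.add (hm.tendsto_msmin u hx)
  exact le_antisymm (ge_of_tendsto' hmax fun n => le_max_of_le_right (le_max_right _ _))
    (hm.nonneg u u u)

end IsMsMetric

def IsKannanMap {X : Type*} (m : X → X → X → ℝ) (T : X → X) (lam : ℝ) : Prop :=
  ∀ x y, m (T x) (T x) (T y) ≤ lam * (m x x (T x) + m y y (T y))

namespace IsKannanMap

variable {X : Type*} {m : X → X → X → ℝ} {T : X → X} {lam : ℝ}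

theorem self_eq_zero_of_isFixedPt (hT : IsKannanMap m T lam) (hm : IsMsMetric m)
    (hl1 : lam < 1 / 2) {v : X} (hv : IsFixedPt T v) : m v v v = 0 := by
  have h := hT v v
  rw [hv] at h
  nlinarith [hm.nonneg v v v]

theorem eq_of_isFixedPt (hT : IsKannanMap m T lam) (hm : IsMsMetric m) (hl1 : lam < 1 / 2)
    {u v : X} (hu : IsFixedPt T u) (hv : IsFixedPt T v) : v = u := by
  have hu0 := hT.self_eq_zero_of_isFixedPt hm hl1 hu
  have hv0 := hT.self_eq_zero_of_isFixedPt hm hl1 hv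
  have h := hT v u
  rw [hu, hv, hu0, hv0] at h
  exact hm.eq_of_eq_zero hv0 hu0 (le_antisymm (by linarith) (hm.nonneg v v u))

theorem step_le (hT : IsKannanMap m T lam) (hl1 : lam < 1) (x : X) :
    m (T x) (T x) (T (T x)) ≤ lam / (1 - lam) * m x x (T x) := by
  rw [div_mul_eq_mul_div, le_div_iff₀ (by linarith)]
  linarith [hT x (T x)]

theorem iterate_step_le (hT : IsKannanMap m T lam) (hl0 : 0 ≤ lam) (hl1 : lam < 1) (x : X)
    (n : ℕ) : m (T^[n] x) (T^[n] x) (T^[n + 1] x) ≤ (lam / (1 - lam)) ^ n * m x x (T x) := by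
  refine le_geom (u := fun n => m (T^[n] x) (T^[n] x) (T^[n + 1] x))
    (div_nonneg hl0 (by linarith)) n fun k _ => ?_
  simpa only [iterate_succ_apply'] using hT.step_le hl1 (T^[k] x)

theorem tendsto_iterate_step (hT : IsKannanMap m T lam) (hm : IsMsMetric m) (hl0 : 0 ≤ lam)
    (hl1 : lam < 1 / 2) (x : X) :
    Tendsto (fun n => m (T^[n] x) (T^[n] x) (T^[n + 1] x)) atTop (𝓝 0) := by
  have hk : lam / (1 - lam) < 1 := by rw [div_lt_one (by linarith)]; linarith
  have hgeom := (tendsto_pow_atTop_nhds_zero_of_lt_one (div_nonneg hl0 (by linarith)) hk).mul_const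
    (m x x (T x))
  rw [zero_mul] at hgeom
  exact squeeze_zero (fun n => hm.nonneg _ _ _) (hT.iterate_step_le hl0 (by linarith) x) hgeom

theorem tendsto_iterate (hT : IsKannanMap m T lam) (hm : IsMsMetric m) (hl0 : 0 ≤ lam)
    (hl1 : lam < 1 / 2) (x : X) :
    Tendsto (fun p : ℕ × ℕ => m (T^[p.1] x) (T^[p.1] x) (T^[p.2] x)) atTop (𝓝 0) := by
  set d := fun n => m (T^[n] x) (T^[n] x) (T^[n + 1] x)
  have hd : Tendsto (fun n => d (n - 1)) atTop (𝓝 0) :=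
    (hT.tendsto_iterate_step hm hl0 hl1 x).comp (tendsto_sub_atTop_nat 1)
  have hbound : Tendsto (fun p : ℕ × ℕ => lam * (d (p.1 - 1) + d (p.2 - 1))) atTop (𝓝 0) := by
    simpa using (tendsto_add_fst_snd_atTop hd).const_mul lam
  refine squeeze_zero' (Eventually.of_forall fun p => hm.nonneg _ _ _) ?_ hbound
  filter_upwards [eventually_ge_atTop ((1, 1) : ℕ × ℕ)] with ⟨i, j⟩ ⟨hi, hj⟩
  obtain ⟨i, rfl⟩ := Nat.exists_eq_add_of_le' hi
  obtain ⟨j, rfl⟩ := Nat.exists_eq_add_of_le' hj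
  simpa only [d, Nat.add_sub_cancel, iterate_succ_apply'] using hT (T^[i] x) (T^[j] x)

theorem isFixedPt_of_tendsto (hT : IsKannanMap m T lam) (hm : IsMsMetric m) (hl1 : lam < 1)
    {x u : X} (hu : m u u u = 0) (hxu : Tendsto (fun n => m (T^[n] x) (T^[n] x) u) atTop (𝓝 0))
    (hstep : Tendsto (fun n => m (T^[n] x) (T^[n] x) (T^[n + 1] x)) atTop (𝓝 0)) :
    IsFixedPt T u := by
  have hle : ∀ n, m u u (T u) ≤
      lam * m u u (T u) + (2 * m (T^[n + 1] x) (T^[n + 1] x) u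
        + lam * m (T^[n] x) (T^[n] x) (T^[n + 1] x)) := by
    intro n
    have htri := hm.sub_msmin_le u (T u) (T^[n + 1] x)
    have hmin : msmin m u u (T u) ≤ 0 := hu ▸ min_le_left _ _
    have hTu : m (T^[n + 1] x) (T^[n + 1] x) (T u) ≤
        lam * (m (T^[n] x) (T^[n] x) (T^[n + 1] x) + m u u (T u)) := by
      simpa only [iterate_succ_apply'] using hT (T^[n] x) u
    rw [hm.symm u (T^[n + 1] x), hm.symm (T u) (T^[n + 1] x)] at htri
    linarith
  have hrest : Tendsto (fun n => 2 * m (T^[n + 1] x) (T^[n + 1] x) u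
      + lam * m (T^[n] x) (T^[n] x) (T^[n + 1] x)) atTop (𝓝 0) := by
    simpa using ((hxu.comp (tendsto_add_atTop_nat 1)).const_mul 2).add (hstep.const_mul lam)
  have hlim : m u u (T u) ≤ lam * m u u (T u) := by
    simpa using ge_of_tendsto' (tendsto_const_nhds.add hrest) hle
  have huTu : m u u (T u) = 0 := by nlinarith [hm.nonneg u u (T u)]
  have hTuTu : m (T u) (T u) (T u) = 0 := by
    have h := hT u u
    rw [huTu] at h
    linarith [hm.nonneg (T u) (T u) (T u)]
  exact hm.eq_of_eq_zero hTuTu hu (by rw [hm.symm, huTu])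

end IsKannanMap

/-- Theorem 2 (Kannan-type contraction in a complete Mₛ-metric space). -/
theorem fixedPoint_of_kannanContraction {X : Type*} [Nonempty X] (m : X → X → X → ℝ)
    (hm : IsMsMetric m) (hcomp : MsComplete m) (T : X → X) (lam : ℝ)
    (hl0 : 0 ≤ lam) (hl1 : lam < 1 / 2)
    (hT : ∀ x y, m (T x) (T x) (T y) ≤ lam * (m x x (T x) + m y y (T y))) :
    ∃ u : X, T u = u ∧ m u u u = 0 ∧ ∀ v : X, T v = v → v = u := by
  have hK : IsKannanMap m T lam := hT
  obtain ⟨x₀⟩ := ‹Nonempty X›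
  have horbit := hK.tendsto_iterate hm hl0 hl1 x₀
  have hdiag := horbit.comp tendsto_atTop_diagonal
  obtain ⟨u, hu, hu'⟩ := hcomp _ (hm.msCauchy_of_tendsto_zero (x := fun n => T^[n] x₀) horbit)
  have huuu := hm.self_eq_zero_of_tendsto_msmax_sub_msmin hdiag hu'
  have hfix : IsFixedPt T u := hK.isFixedPt_of_tendsto hm (by linarith) huuu
    (hm.tendsto_of_msConvergesTo hdiag hu) (hK.tendsto_iterate_step hm hl0 hl1 x₀)
  exact ⟨u, hfix, huuu, fun v hv => hK.eq_of_isFixedPt hm hl1 hfix hv⟩
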